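/- Fix s < 0 and 0 < T < 2π. There is no space X_T continuously embedded in C([-T,T]; H^s_per) such that both ‖S(t)φ‖_{X_T} ≤ c₀‖φ‖_{H^s_per} for all φ ∈ H^s_per and ‖∫₀ᵗ S(t-τ)Λ[u_x(τ)u(τ)]dτ‖_{X_T} ≤ c₀‖u‖²_{X_T} for all u ∈ X_T hold. In particular, the key quantitative fact is: for φ_N(x) = N^{-s}cos(Nx), the ratio ‖ψ_N(·,t)‖_{H^s_per}/‖φ_N‖²_{H^s_per} ∼ N^{-s}(1-cos(γ_N t))^{1/2} → ∞ as N → ∞ for each fixed t ∈ (0,T), where γ_N = 2N²/((1+N)(1+2N)) and ψ_N is the bilinear Duhamel term associated with φ_N. -/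

import Mathlib

/-!
For `φ_N = N^{-s} cos (N x)` only the modes `±N` are excited, so the nonlinearity
`S(τ)φ_N · ∂ₓ S(τ)φ_N` lives on the modes `0, ±2N`, and its zero mode cancels. At `n = ±2N`
the Duhamel integrand is a pure oscillation `e^{∓iγ_N τ}` with `γ_N = 2 pm(N) - pm(2N)`, which
integrates to `|ψ̂_N(±2N)| = N c_N² |2 sin (γ_N t / 2)| / ((1 + 2N) γ_N)`, where `c_N = N^{-s}/2`.
In the ratio of Sobolev norms `c_N` cancels, leaving `((1 + 4N²)/(1 + N²)²)^{s/2}`, which tends to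
`∞` because `s < 0`, times a factor tending to `sin (t/2) / (2√π)`; this is positive because
`γ_N → 1` and `0 < t < 2π`.
-/

open MeasureTheory

noncomputable def hNorm (s : ℝ) (a : ℤ → ℂ) : ℝ :=
  Real.sqrt (2 * Real.pi * ∑' k : ℤ, (1 + (k : ℝ) ^ 2) ^ s * ‖a k‖ ^ 2)

noncomputable def pm (n : ℤ) : ℝ := (n : ℝ) / (1 + |(n : ℝ)|)

/-- `n`-th Fourier coefficient of `ψ_φ(t) = ∫₀ᵗ S(t-τ) Λ[S(τ)φ (S(τ)φ)ₓ] dτ`. -/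
noncomputable def duhamelCoef (a : ℤ → ℂ) (t : ℝ) (n : ℤ) : ℂ :=
  ∫ τ in (0:ℝ)..t,
    Complex.exp (-Complex.I * (pm n : ℂ) * ((t : ℂ) - (τ : ℂ))) * ((1 + |(n : ℝ)| : ℝ) : ℂ)⁻¹ *
      ∑' m : ℤ, (Complex.exp (-Complex.I * (pm m : ℂ) * (τ : ℂ)) * a m) *
        (Complex.I * ((n - m : ℤ) : ℂ)) *
          (Complex.exp (-Complex.I * (pm (n - m) : ℂ) * (τ : ℂ)) * a (n - m))

/-- Fourier coefficients of `φ_N(x) = N^{-s} cos (N x)`. -/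
noncomputable def cosCoef (s : ℝ) (N : ℕ) : ℤ → ℂ := fun k =>
  if k = (N : ℤ) ∨ k = -(N : ℤ) then (((N : ℝ) ^ (-s) / 2 : ℝ) : ℂ) else 0

open Filter Topology Complex

lemma pm_neg (n : ℤ) : pm (-n) = -pm n := by
  simp [pm, neg_div]

lemma pm_natCast (N : ℕ) : pm N = N / (N + 1) := by
  simp [pm, add_comm]

lemma pm_two_mul_natCast (N : ℕ) : pm (2 * N) = 2 * N / (2 * N + 1) := by
  simpa using pm_natCast (2 * N)

lemma tendsto_pm_natCast : Tendsto (fun N : ℕ => pm N) atTop (𝓝 1) := by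
  simpa only [pm_natCast] using tendsto_natCast_div_add_atTop (1 : ℝ)

lemma tendsto_pm_two_mul_natCast : Tendsto (fun N : ℕ => pm (2 * N)) atTop (𝓝 1) := by
  have h := tendsto_pm_natCast.comp (tendsto_id.const_mul_atTop' two_pos)
  simpa [Function.comp_def] using h

/-- The paper's `γ_N`, the phase mismatch of the resonant interaction `N + N → 2N`. -/
noncomputable def resonanceGap (N : ℕ) : ℝ := 2 * pm N - pm (2 * N)

lemma resonanceGap_eq (N : ℕ) : resonanceGap N = 2 * N ^ 2 / ((1 + N) * (1 + 2 * N)) := by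
  rw [resonanceGap, pm_natCast, pm_two_mul_natCast]
  field_simp
  ring

lemma resonanceGap_pos {N : ℕ} (hN : N ≠ 0) : 0 < resonanceGap N := by
  rw [resonanceGap_eq]
  have : (0 : ℝ) < N := by exact_mod_cast Nat.pos_of_ne_zero hN
  positivity

lemma tendsto_resonanceGap : Tendsto resonanceGap atTop (𝓝 1) := by
  have h := (tendsto_pm_natCast.const_mul 2).sub tendsto_pm_two_mul_natCast
  norm_num at h
  exact h

lemma hNorm_of_support_pair (s : ℝ) (a : ℤ → ℂ) {n : ℤ} (hn : n ≠ 0)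
    (ha : ∀ k, k ≠ n → k ≠ -n → a k = 0) (hsymm : ‖a (-n)‖ = ‖a n‖) :
    hNorm s a = 2 * Real.sqrt Real.pi * (1 + (n : ℝ) ^ 2) ^ (s / 2) * ‖a n‖ := by
  have hpair : n ≠ -n := by omega
  have hsum : ∑' k : ℤ, (1 + (k : ℝ) ^ 2) ^ s * ‖a k‖ ^ 2
      = 2 * (1 + (n : ℝ) ^ 2) ^ s * ‖a n‖ ^ 2 := by
    rw [tsum_eq_sum (s := {n, -n}) (fun k hk => by
        simp only [Finset.mem_insert, Finset.mem_singleton, not_or] at hk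
        simp [ha k hk.1 hk.2]),
      Finset.sum_pair hpair, hsymm, Int.cast_neg, neg_sq]
    ring
  have hX : (0 : ℝ) < 1 + (n : ℝ) ^ 2 := by positivity
  have hrpow : ((1 + (n : ℝ) ^ 2) ^ (s / 2)) ^ 2 = (1 + (n : ℝ) ^ 2) ^ s := by
    rw [sq, ← Real.rpow_add hX, add_halves]
  rw [hNorm, hsum, ← Real.sqrt_sq (by positivity : 0 ≤ 2 * Real.sqrt Real.pi *
      (1 + (n : ℝ) ^ 2) ^ (s / 2) * ‖a n‖)]
  congr 1
  rw [mul_pow, mul_pow, hrpow, mul_pow, Real.sq_sqrt Real.pi_nonneg]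
  ring

/-- `(S(τ)φ)^(m)` for `φ̂ = a`. -/
noncomputable def freeWave (a : ℤ → ℂ) (τ : ℝ) (m : ℤ) : ℂ := exp (-I * (pm m : ℂ) * (τ : ℂ)) * a m

/-- `(S(τ)φ · ∂ₓ S(τ)φ)^(n)` for `φ̂ = a`. -/
noncomputable def nonlinCoef (a : ℤ → ℂ) (τ : ℝ) (n : ℤ) : ℂ :=
  ∑' m : ℤ, freeWave a τ m * (I * ((n - m : ℤ) : ℂ)) * freeWave a τ (n - m)

lemma duhamelCoef_eq_integral_nonlinCoef (a : ℤ → ℂ) (t : ℝ) (n : ℤ) :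
    duhamelCoef a t n = ∫ τ in (0 : ℝ)..t,
      exp (-I * pm n * (t - τ)) * ((1 + |(n : ℝ)| : ℝ) : ℂ)⁻¹ * nonlinCoef a τ n :=
  rfl

lemma duhamelCoef_eq_of_nonlinCoef_eq (a : ℤ → ℂ) (t : ℝ) (n : ℤ) (C : ℂ) {β : ℝ}
    (hβ : β ≠ pm n) (h : ∀ τ : ℝ, nonlinCoef a τ n = C * exp (-I * β * τ)) :
    duhamelCoef a t n = exp (-I * pm n * t) * ((1 + |(n : ℝ)| : ℝ) : ℂ)⁻¹ * C *
      ((exp (-I * (β - pm n : ℝ) * t) - 1) / (-I * (β - pm n : ℝ))) := by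
  have hc : -I * ((β - pm n : ℝ) : ℂ) ≠ 0 := by
    simpa [I_ne_zero, sub_eq_zero] using hβ
  have hintegrand : ∀ τ : ℝ,
      exp (-I * pm n * (t - τ)) * ((1 + |(n : ℝ)| : ℝ) : ℂ)⁻¹ * nonlinCoef a τ n
        = exp (-I * pm n * t) * ((1 + |(n : ℝ)| : ℝ) : ℂ)⁻¹ * C *
          exp (-I * (β - pm n : ℝ) * τ) := by
    intro τ
    rw [h τ]
    have hphase : exp (-I * pm n * (t - τ)) * exp (-I * β * τ)
        = exp (-I * pm n * t) * exp (-I * (β - pm n : ℝ) * τ) := by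
      rw [← exp_add, ← exp_add]
      push_cast
      ring_nf
    linear_combination ((1 + |(n : ℝ)| : ℝ) : ℂ)⁻¹ * C * hphase
  simp_rw [duhamelCoef_eq_integral_nonlinCoef, hintegrand]
  rw [intervalIntegral.integral_const_mul, integral_exp_mul_complex hc]
  simp

lemma norm_duhamelCoef_of_nonlinCoef_eq (a : ℤ → ℂ) (t : ℝ) (n : ℤ) (C : ℂ) {β : ℝ}
    (hβ : β ≠ pm n) (h : ∀ τ : ℝ, nonlinCoef a τ n = C * exp (-I * β * τ)) :
    ‖duhamelCoef a t n‖
      = ‖C‖ * |2 * Real.sin ((β - pm n) * t / 2)| / ((1 + |(n : ℝ)|) * |β - pm n|) := by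
  have hphase : ‖exp (-I * pm n * t)‖ = 1 := by
    rw [show -I * pm n * t = ((-(pm n * t) : ℝ) : ℂ) * I by push_cast; ring]
    exact norm_exp_ofReal_mul_I _
  have hosc : ‖exp (-I * (β - pm n : ℝ) * t) - 1‖ = |2 * Real.sin ((β - pm n) * t / 2)| := by
    rw [show -I * ((β - pm n : ℝ) : ℂ) * t = I * ((-((β - pm n) * t) : ℝ) : ℂ) by
      push_cast; ring, norm_exp_I_mul_ofReal_sub_one, Real.norm_eq_abs, neg_div,
      Real.sin_neg, mul_neg, abs_neg]
  rw [duhamelCoef_eq_of_nonlinCoef_eq a t n C hβ h, norm_mul, norm_mul, norm_mul, norm_div,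
    hphase, hosc, norm_inv, norm_mul, norm_neg, norm_I, norm_real, norm_real, Real.norm_eq_abs,
    Real.norm_eq_abs, abs_of_pos (by positivity : (0 : ℝ) < 1 + |(n : ℝ)|)]
  field_simp

section cosCoef

variable (s : ℝ) {N : ℕ} (τ : ℝ)

lemma freeWave_cosCoef_natCast :
    freeWave (cosCoef s N) τ N = ((N : ℝ) ^ (-s) / 2 : ℝ) * exp (-I * pm N * τ) := by
  simp [freeWave, cosCoef, mul_comm]

lemma freeWave_cosCoef_neg_natCast :
    freeWave (cosCoef s N) τ (-N) = ((N : ℝ) ^ (-s) / 2 : ℝ) * exp (I * pm N * τ) := by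
  simp [freeWave, cosCoef, pm_neg, mul_comm]

lemma freeWave_cosCoef_of_ne {k : ℤ} (hk : k ≠ N) (hk' : k ≠ -N) :
    freeWave (cosCoef s N) τ k = 0 := by
  simp [freeWave, cosCoef, hk, hk']

lemma nonlinCoef_cosCoef (hN : N ≠ 0) (n : ℤ) :
    nonlinCoef (cosCoef s N) τ n
      = freeWave (cosCoef s N) τ N * (I * ((n - N : ℤ) : ℂ)) * freeWave (cosCoef s N) τ (n - N)
        + freeWave (cosCoef s N) τ (-N) * (I * ((n + N : ℤ) : ℂ))
          * freeWave (cosCoef s N) τ (n + N) := by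
  rw [nonlinCoef, tsum_eq_sum (s := {(N : ℤ), -(N : ℤ)}) (fun m hm => by
      simp only [Finset.mem_insert, Finset.mem_singleton, not_or] at hm
      simp [freeWave_cosCoef_of_ne s τ hm.1 hm.2]),
    Finset.sum_pair (by omega), sub_neg_eq_add]

lemma nonlinCoef_cosCoef_two_mul (hN : N ≠ 0) :
    nonlinCoef (cosCoef s N) τ (2 * N)
      = (I * N * ((N : ℝ) ^ (-s) / 2 : ℝ) ^ 2) * exp (-I * (2 * pm N : ℝ) * τ) := by
  rw [nonlinCoef_cosCoef s τ hN, show (2 * N : ℤ) - N = N by ring,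
    freeWave_cosCoef_of_ne s τ (k := 2 * N + N) (by omega) (by omega),
    mul_zero, add_zero, freeWave_cosCoef_natCast]
  have hphase : exp (-I * (2 * pm N : ℝ) * τ) = exp (-I * pm N * τ) * exp (-I * pm N * τ) := by
    rw [← exp_add]
    push_cast
    ring_nf
  rw [hphase]
  push_cast
  ring

lemma nonlinCoef_cosCoef_neg_two_mul (hN : N ≠ 0) :
    nonlinCoef (cosCoef s N) τ (-(2 * N))
      = -(I * N * ((N : ℝ) ^ (-s) / 2 : ℝ) ^ 2) * exp (-I * (-(2 * pm N) : ℝ) * τ) := by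
  rw [nonlinCoef_cosCoef s τ hN, show -(2 * N : ℤ) + N = -N by ring,
    freeWave_cosCoef_of_ne s τ (k := -(2 * N) - N) (by omega) (by omega),
    mul_zero, zero_add, freeWave_cosCoef_neg_natCast]
  have hphase : exp (-I * (-(2 * pm N) : ℝ) * τ) = exp (I * pm N * τ) * exp (I * pm N * τ) := by
    rw [← exp_add]
    push_cast
    ring_nf
  rw [hphase]
  push_cast
  ring

lemma nonlinCoef_cosCoef_eq_zero (hN : N ≠ 0) {n : ℤ} (hn : n ≠ 2 * N) (hn' : n ≠ -(2 * N)) :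
    nonlinCoef (cosCoef s N) τ n = 0 := by
  rw [nonlinCoef_cosCoef s τ hN]
  by_cases h0 : n = 0
  · subst h0
    rw [zero_sub, zero_add, freeWave_cosCoef_natCast, freeWave_cosCoef_neg_natCast]
    push_cast
    ring
  · rw [freeWave_cosCoef_of_ne s τ (k := n - N) (by omega) (by omega),
      freeWave_cosCoef_of_ne s τ (k := n + N) (by omega) (by omega)]
    ring

variable (t : ℝ)

lemma norm_duhamelCoef_cosCoef_two_mul (hN : N ≠ 0) :
    ‖duhamelCoef (cosCoef s N) t (2 * N)‖ = N * ((N : ℝ) ^ (-s) / 2) ^ 2 *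
      |2 * Real.sin (resonanceGap N * t / 2)| / ((1 + 2 * N) * resonanceGap N) := by
  have hγ := resonanceGap_pos hN
  have habs : |((2 * N : ℤ) : ℝ)| = 2 * N := by
    push_cast
    exact abs_of_nonneg (by positivity)
  rw [norm_duhamelCoef_of_nonlinCoef_eq _ t _ _ (by unfold resonanceGap at hγ; linarith)
      (nonlinCoef_cosCoef_two_mul s · hN), show 2 * pm N - pm (2 * N) = resonanceGap N from rfl,
    abs_of_pos hγ, habs]
  simp [abs_of_nonneg (Real.rpow_nonneg N.cast_nonneg (-s))]

lemma norm_duhamelCoef_cosCoef_neg_two_mul (hN : N ≠ 0) :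
    ‖duhamelCoef (cosCoef s N) t (-(2 * N))‖ = N * ((N : ℝ) ^ (-s) / 2) ^ 2 *
      |2 * Real.sin (resonanceGap N * t / 2)| / ((1 + 2 * N) * resonanceGap N) := by
  have hγ := resonanceGap_pos hN
  have habs : |((-(2 * N) : ℤ) : ℝ)| = 2 * N := by
    push_cast
    rw [abs_neg]
    exact abs_of_nonneg (by positivity)
  rw [norm_duhamelCoef_of_nonlinCoef_eq _ t _ _
      (by rw [pm_neg]; unfold resonanceGap at hγ; linarith)
      (nonlinCoef_cosCoef_neg_two_mul s · hN), pm_neg,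
    show -(2 * pm N) - -pm (2 * N) = -resonanceGap N by unfold resonanceGap; ring,
    abs_neg, abs_of_pos hγ, neg_mul, neg_div, Real.sin_neg, mul_neg, abs_neg, habs]
  simp [abs_of_nonneg (Real.rpow_nonneg N.cast_nonneg (-s))]

lemma hNorm_cosCoef (hN : N ≠ 0) :
    hNorm s (cosCoef s N) = 2 * Real.sqrt Real.pi * (1 + (N : ℝ) ^ 2) ^ (s / 2) *
      ((N : ℝ) ^ (-s) / 2) := by
  rw [hNorm_of_support_pair s _ (n := N) (by omega) (fun k hk hk' => by simp [cosCoef, hk, hk'])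
    (by simp [cosCoef])]
  simp [cosCoef, abs_of_nonneg (Real.rpow_nonneg N.cast_nonneg (-s))]

lemma hNorm_duhamelCoef_cosCoef (hN : N ≠ 0) :
    hNorm s (duhamelCoef (cosCoef s N) t)
      = 2 * Real.sqrt Real.pi * (1 + (2 * N : ℝ) ^ 2) ^ (s / 2) *
        (N * ((N : ℝ) ^ (-s) / 2) ^ 2 * |2 * Real.sin (resonanceGap N * t / 2)| /
          ((1 + 2 * N) * resonanceGap N)) := by
  have hvanish : ∀ k : ℤ, k ≠ 2 * N → k ≠ -(2 * N) → duhamelCoef (cosCoef s N) t k = 0 :=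
    fun k hk hk' => by
      simp [duhamelCoef_eq_integral_nonlinCoef, nonlinCoef_cosCoef_eq_zero s _ hN hk hk']
  rw [hNorm_of_support_pair s _ (n := 2 * N) (by omega) hvanish
    (by rw [norm_duhamelCoef_cosCoef_two_mul s t hN, norm_duhamelCoef_cosCoef_neg_two_mul s t hN]),
    norm_duhamelCoef_cosCoef_two_mul s t hN]
  push_cast
  ring

lemma hNorm_duhamelCoef_cosCoef_div_sq (hN : N ≠ 0) :
    hNorm s (duhamelCoef (cosCoef s N) t) / hNorm s (cosCoef s N) ^ 2
      = ((1 + (2 * N : ℝ) ^ 2) / (1 + (N : ℝ) ^ 2) ^ 2) ^ (s / 2) *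
        (pm (2 * N) * |2 * Real.sin (resonanceGap N * t / 2)| /
          (4 * Real.sqrt Real.pi * resonanceGap N)) := by
  have hγ := resonanceGap_pos hN
  have hY : (0 : ℝ) < 1 + (N : ℝ) ^ 2 := by positivity
  have hNpos : (0 : ℝ) < N := by exact_mod_cast Nat.pos_of_ne_zero hN
  rw [hNorm_duhamelCoef_cosCoef s t hN, hNorm_cosCoef s hN, pm_two_mul_natCast,
    Real.div_rpow (by positivity) (by positivity), ← Real.rpow_pow_comm hY.le]
  have hπ : 0 < Real.sqrt Real.pi := Real.sqrt_pos.mpr Real.pi_pos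
  have hc : 0 < (N : ℝ) ^ (-s) := Real.rpow_pos_of_pos hNpos _
  have hw : 0 < (1 + (N : ℝ) ^ 2) ^ (s / 2) := Real.rpow_pos_of_pos hY _
  field_simp
  ring

end cosCoef

lemma tendsto_sobolevWeightRatio {s : ℝ} (hs : s < 0) :
    Tendsto (fun N : ℕ => ((1 + (2 * N : ℝ) ^ 2) / (1 + (N : ℝ) ^ 2) ^ 2) ^ (s / 2))
      atTop atTop := by
  have hbound : ∀ N : ℕ, (1 + (2 * N : ℝ) ^ 2) / (1 + (N : ℝ) ^ 2) ^ 2 ≤ 4 / (1 + (N : ℝ) ^ 2) := by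
    intro N
    rw [div_le_div_iff₀ (by positivity) (by positivity)]
    nlinarith [sq_nonneg (N : ℝ)]
  have hden : Tendsto (fun N : ℕ => 1 + (N : ℝ) ^ 2) atTop atTop :=
    tendsto_atTop_add_const_left _ _
      ((tendsto_pow_atTop two_ne_zero).comp tendsto_natCast_atTop_atTop)
  have hzero : Tendsto (fun N : ℕ => (1 + (2 * N : ℝ) ^ 2) / (1 + (N : ℝ) ^ 2) ^ 2)
      atTop (𝓝[>] 0) :=
    tendsto_nhdsWithin_iff.mpr ⟨squeeze_zero (fun N => by positivity) hbound
      (tendsto_const_nhds.div_atTop hden),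
      Eventually.of_forall fun N => Set.mem_Ioi.mpr (by positivity)⟩
  exact (tendsto_rpow_neg_nhdsGT_zero (by linarith)).comp hzero

lemma tendsto_hNorm_duhamelCoef_cosCoef_div_sq {s t : ℝ} (hs : s < 0) (ht : 0 < t)
    (ht' : t < 2 * Real.pi) :
    Tendsto (fun N : ℕ => hNorm s (duhamelCoef (cosCoef s N) t) / hNorm s (cosCoef s N) ^ 2)
      atTop atTop := by
  have hsin : 0 < Real.sin (t / 2) := Real.sin_pos_of_pos_of_lt_pi (by linarith) (by linarith)
  have hπ : 0 < Real.sqrt Real.pi := Real.sqrt_pos.mpr Real.pi_pos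
  have hosc : Continuous fun γ : ℝ => |2 * Real.sin (γ * t / 2)| := by fun_prop
  have hfactor : Tendsto (fun N : ℕ => pm (2 * N) * |2 * Real.sin (resonanceGap N * t / 2)| /
      (4 * Real.sqrt Real.pi * resonanceGap N)) atTop
      (𝓝 (1 * |2 * Real.sin (1 * t / 2)| / (4 * Real.sqrt Real.pi * 1))) :=
    (tendsto_pm_two_mul_natCast.mul ((hosc.tendsto 1).comp tendsto_resonanceGap)).div
      (tendsto_resonanceGap.const_mul _) (by positivity)
  have hlimit : 0 < 1 * |2 * Real.sin (1 * t / 2)| / (4 * Real.sqrt Real.pi * 1) := by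
    simp only [one_mul, mul_one, abs_of_pos (by positivity : 0 < 2 * Real.sin (t / 2))]
    positivity
  refine ((tendsto_sobolevWeightRatio hs).atTop_mul_pos hlimit hfactor).congr' ?_
  filter_upwards [eventually_ne_atTop 0] with N hN
  exact (hNorm_duhamelCoef_cosCoef_div_sq s t hN).symm

theorem rBO_illposedness_general (s T : ℝ) (hs : s < 0) (hT : T < 2 * Real.pi) :
    (∀ t ∈ Set.Ioo (0:ℝ) T,
      Filter.Tendsto
        (fun N : ℕ => hNorm s (duhamelCoef (cosCoef s N) t) / (hNorm s (cosCoef s N)) ^ 2)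
        Filter.atTop Filter.atTop) ∧
    (∀ c₀ > (0:ℝ), ∀ t ∈ Set.Ioo (0:ℝ) T, ∃ φ : ℤ → ℂ,
      c₀ * (hNorm s φ) ^ 2 < hNorm s (duhamelCoef φ t)) := by
  have hblowup : ∀ t ∈ Set.Ioo (0:ℝ) T, Tendsto
      (fun N : ℕ => hNorm s (duhamelCoef (cosCoef s N) t) / hNorm s (cosCoef s N) ^ 2)
      atTop atTop :=
    fun t ht => tendsto_hNorm_duhamelCoef_cosCoef_div_sq hs ht.1 (ht.2.trans hT)
  refine ⟨hblowup, fun c₀ _ t ht => ?_⟩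
  obtain ⟨N, hratio, hN⟩ :=
    (((hblowup t ht).eventually_gt_atTop c₀).and (eventually_ne_atTop 0)).exists
  refine ⟨cosCoef s N, (lt_div_iff₀ ?_).mp hratio⟩
  rw [hNorm_cosCoef s hN]
  have : (0 : ℝ) < N := by exact_mod_cast Nat.pos_of_ne_zero hN
  positivity

/-- **Failure of the quadratic Duhamel estimate for `s < 0`**: the ratio
`‖ψ_N(t)‖_{H^s}/‖φ_N‖²_{H^s}` blows up as `N → ∞` for each `t ∈ (0,T)`;
in particular no constant `c₀ > 0` satisfying the bilinear estimate (and hence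
no space `X_T` as in Theorem 4.1) can exist. -/
theorem rBO_illposedness (s T : ℝ) (hs : s < 0) (hT0 : 0 < T) (hT : T < 2 * Real.pi) :
    (∀ t ∈ Set.Ioo (0:ℝ) T,
      Filter.Tendsto
        (fun N : ℕ => hNorm s (duhamelCoef (cosCoef s N) t) / (hNorm s (cosCoef s N)) ^ 2)
        Filter.atTop Filter.atTop) ∧
    (∀ c₀ > (0:ℝ), ∀ t ∈ Set.Ioo (0:ℝ) T, ∃ φ : ℤ → ℂ,
      c₀ * (hNorm s φ) ^ 2 < hNorm s (duhamelCoef φ t)) :=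
  rBO_illposedness_general s T hs hT
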